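/- arXiv:1702.07456 — 12 statements merged into one kernel-verified Lean document; each statement's English description precedes it below -/
import Mathlib

section
/- Let p be a prime and a ∈ ZMod p, with b₁₁ = (1, 0), b₁₂ = (1, a), b₂ = (a, -1) in (ZMod p)². For all x₁, x₂, y ∈ ZMod p, ⟪x₁ • b₁₁ + x₂ • b₂, y • b₁₂⟫ = x₁ * y. (That is, the pairing of any ciphertext-side vector, lying in the span of b₁₁ and b₂, with any token-side vector, lying in the span of b₁₂, depends only on the b₁₁-component of the former and the b₁₂-component of the latter.) -/
/-- Inner product on `(ZMod p)²`. -/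
def inner2 {p : ℕ} (u v : Fin 2 → ZMod p) : ZMod p := u 0 * v 0 + u 1 * v 1

/-- Basis vector `b₁₁ = (1, 0)`. -/
def bwB11 {p : ℕ} : Fin 2 → ZMod p := ![1, 0]

/-- Basis vector `b₁₂ = (1, a)`. -/
def bwB12 {p : ℕ} (a : ZMod p) : Fin 2 → ZMod p := ![1, a]

/-- Basis vector `b₂ = (a, -1)`. -/
def bwB2 {p : ℕ} (a : ZMod p) : Fin 2 → ZMod p := ![a, -1]

theorem stmt_2 (p : ℕ) (hp : p.Prime) (a : ZMod p) :
    ∀ x₁ x₂ y : ZMod p,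
      inner2 (x₁ • bwB11 + x₂ • bwB2 a) (y • bwB12 a) = x₁ * y := by
  intro x₁ x₂ y
  simp [inner2, bwB11, bwB12, bwB2]
  ring
end

section
/- Let p be a prime and a₁, a₂, a₃ ∈ ZMod p, with b₁₁ = (1, 0, a₁), b₁₂ = (1, a₂, 0), b₂ = (a₂, -1, a₁a₂ - a₃), b₃ = (a₁, a₃, -1) in (ZMod p)³. For all x₁, x₂, y₁, y₂ ∈ ZMod p, ⟪x₁ • b₁₁ + x₂ • b₂, y₁ • b₁₂ + y₂ • b₃⟫ = x₁ * y₁. (That is, the pairing of any ciphertext-side vector, lying in the span of b₁₁ and b₂, with any token-side vector, lying in the span of b₁₂ and b₃, depends only on the b₁₁-component of the former and the b₁₂-component of the latter.) -/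
/-- Inner product on `(ZMod p)³`. -/
def inner3 {p : ℕ} (u v : Fin 3 → ZMod p) : ZMod p := ∑ i, u i * v i

/-- Basis vector `b₁₁ = (1, 0, a₁)`. -/
def llB11 {p : ℕ} (a₁ : ZMod p) : Fin 3 → ZMod p := ![1, 0, a₁]

/-- Basis vector `b₁₂ = (1, a₂, 0)`. -/
def llB12 {p : ℕ} (a₂ : ZMod p) : Fin 3 → ZMod p := ![1, a₂, 0]

/-- Basis vector `b₂ = (a₂, -1, a₁a₂ - a₃)`. -/
def llB2 {p : ℕ} (a₁ a₂ a₃ : ZMod p) : Fin 3 → ZMod p := ![a₂, -1, a₁ * a₂ - a₃]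

/-- Basis vector `b₃ = (a₁, a₃, -1)`. -/
def llB3 {p : ℕ} (a₁ a₃ : ZMod p) : Fin 3 → ZMod p := ![a₁, a₃, -1]

theorem stmt_4 (p : ℕ) (hp : p.Prime) (a₁ a₂ a₃ : ZMod p) :
    ∀ x₁ x₂ y₁ y₂ : ZMod p,
      inner3 (x₁ • llB11 a₁ + x₂ • llB2 a₁ a₂ a₃)
             (y₁ • llB12 a₂ + y₂ • llB3 a₁ a₃) = x₁ * y₁ := by
  intro x₁ x₂ y₁ y₂
  simp [inner3, llB11, llB12, llB2, llB3, Fin.sum_univ_three]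
  ring
end

section
/- (Assumption 4-2 / Assumption 5-2 holds unconditionally.) Let p be a prime and a₁, a₂, a₃ ∈ ZMod p, with b₁₁ = (1, 0, a₁), b₁₂ = (1, a₂, 0), b₂ = (a₂, -1, a₁a₂ - a₃), b₃ = (a₁, a₃, -1) in (ZMod p)³. For all c₁, c₂, c₃, c₄ ∈ ZMod p, ⟪c₁ • b₁₁ + c₃ • b₂, c₂ • b₁₂ + c₄ • b₃⟫ = ⟪c₁ • b₁₁, c₂ • b₁₂⟫. (Hence e((g^{b₁₁})^{c₁} (g^{b₂})^{c₃}, (g^{b₁₂})^{c₂} (g^{b₃})^{c₄}) = e((g^{b₁₁})^{c₁}, (g^{b₁₂})^{c₂}) in the bilinear product group, so no adversary can distinguish the two cases of this assumption.) -/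
theorem stmt_5 (p : ℕ) (hp : p.Prime) (a₁ a₂ a₃ : ZMod p) :
    ∀ c₁ c₂ c₃ c₄ : ZMod p,
      inner3 (c₁ • llB11 a₁ + c₃ • llB2 a₁ a₂ a₃)
             (c₂ • llB12 a₂ + c₄ • llB3 a₁ a₃)
        = inner3 (c₁ • llB11 a₁) (c₂ • llB12 a₂) := by
  intro c₁ c₂ c₃ c₄
  simp [inner3, llB11, llB12, llB2, llB3, Fin.sum_univ_three]
  ring
end

section
/- (General query identity for the converted Boneh–Waters HVE scheme.) Let p be a prime, a ∈ ZMod p, l ∈ ℕ, S a finite subset of Fin l, and let α, v', t, ζ₁ ∈ ZMod p and u', h', w', x, σ, r₁, r₂, ζ₂, ζ₃ : Fin l → ZMod p. Define in (ZMod p)²: C₁ = (t*v') • b₁₁ + ζ₁ • b₂; for each i, C₂ᵢ = (t*(x i * u' i + h' i)) • b₁₁ + ζ₂ i • b₂ and C₃ᵢ = (t * w' i) • b₁₁ + ζ₃ i • b₂; K₁ = (α + ∑_{i ∈ S} (r₁ i * (σ i * u' i + h' i) + r₂ i * w' i)) • b₁₂; and for each i, K₂ᵢ = (-(r₁ i)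 * v') • b₁₂ and K₃ᵢ = (-(r₂ i) * v') • b₁₂. Then ⟪C₁, K₁⟫ + ∑_{i ∈ S} (⟪C₂ᵢ, K₂ᵢ⟫ + ⟪C₃ᵢ, K₃ᵢ⟫) = α*t*v' + t*v' * ∑_{i ∈ S} r₁ i * u' i * (σ i - x i). -/
theorem stmt_7 (p : ℕ) (hp : p.Prime) (a : ZMod p) (l : ℕ) (S : Finset (Fin l))
    (α v' t ζ₁ : ZMod p) (u' h' w' x σ r₁ r₂ ζ₂ ζ₃ : Fin l → ZMod p) :
    inner2 ((t * v') • bwB11 + ζ₁ • bwB2 a)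
        ((α + ∑ i ∈ S, (r₁ i * (σ i * u' i + h' i) + r₂ i * w' i)) • bwB12 a)
      + ∑ i ∈ S,
          (inner2 ((t * (x i * u' i + h' i)) • bwB11 + ζ₂ i • bwB2 a)
              ((-(r₁ i) * v') • bwB12 a)
            + inner2 ((t * w' i) • bwB11 + ζ₃ i • bwB2 a)
                ((-(r₂ i) * v') • bwB12 a))
      = α * t * v' + t * v' * ∑ i ∈ S, r₁ i * u' i * (σ i - x i) := by
  simp only [inner2, bwB11, bwB12, bwB2, Pi.add_apply, Pi.smul_apply, smul_eq_mul,
    Matrix.cons_val_zero, Matrix.cons_val_one, Matrix.head_cons]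
  have h : ∀ A : ZMod p,
      (t * v' * 1 + ζ₁ * a) * (A * 1) + (t * v' * 0 + ζ₁ * -1) * (A * a) = t * v' * A :=
    fun A => by ring
  rw [h, mul_add, add_assoc, Finset.mul_sum, Finset.mul_sum, ← Finset.sum_add_distrib]
  congr 1
  · ring
  · exact Finset.sum_congr rfl fun i _ => by ring
end

section
/- (Correctness of the converted Boneh–Waters HVE scheme.) Let p be a prime, a ∈ ZMod p, l ∈ ℕ, S a finite subset of Fin l, and let α, v', t, ζ₁ ∈ ZMod p and u', h', w', x, σ, r₁, r₂, ζ₂, ζ₃ : Fin l → ZMod p. Define C₁ = (t*v') • b₁₁ + ζ₁ • b₂, C₂ᵢ = (t*(x i * u' i + h' i)) • b₁₁ + ζ₂ i • b₂, C₃ᵢ = (t * w' i) • b₁₁ + ζ₃ i • b₂, K₁ = (α + ∑_{i ∈ S} (r₁ i * (σ i * u' i + h' i) + r₂ i * w' i)) • b₁₂, K₂ᵢ = (-(r₁ i) * v') • b₁₂, K₃ᵢ = (-(r₂ i) * v') • b₁₂ in (ZMod p)². If σ i = x i for every i ∈ S, then ⟪C₁, K₁⟫ + ∑_{i ∈ S}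 (⟪C₂ᵢ, K₂ᵢ⟫ + ⟪C₃ᵢ, K₃ᵢ⟫) = α*t*v'. (Hence Query(CT, TK_σ, PK) recovers M = C₀ / Ω^t, since Ω^t = ê(g,g)^{α t v'}.) -/
theorem stmt_8 (p : ℕ) (hp : p.Prime) (a : ZMod p) (l : ℕ) (S : Finset (Fin l))
    (α v' t ζ₁ : ZMod p) (u' h' w' x σ r₁ r₂ ζ₂ ζ₃ : Fin l → ZMod p)
    (hmatch : ∀ i ∈ S, σ i = x i) :
    inner2 ((t * v') • bwB11 + ζ₁ • bwB2 a)
        ((α + ∑ i ∈ S, (r₁ i * (σ i * u' i + h' i) + r₂ i * w' i)) • bwB12 a)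
      + ∑ i ∈ S,
          (inner2 ((t * (x i * u' i + h' i)) • bwB11 + ζ₂ i • bwB2 a)
              ((-(r₁ i) * v') • bwB12 a)
            + inner2 ((t * w' i) • bwB11 + ζ₃ i • bwB2 a)
                ((-(r₂ i) * v') • bwB12 a))
      = α * t * v' := by
  simp only [inner2, bwB11, bwB12, bwB2, Pi.add_apply, Pi.smul_apply, Matrix.cons_val_zero,
    Matrix.cons_val_one, Matrix.head_cons, smul_eq_mul, mul_one, mul_neg, mul_zero]
  rw [Finset.sum_congr rfl (fun i hi => by rw [hmatch i hi])]
  set s := ∑ i ∈ S, (r₁ i * (x i * u' i + h' i) + r₂ i * w' i) with hs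
  have key : ∑ i ∈ S,
          ((t * (x i * u' i + h' i) + ζ₂ i * a) * (-r₁ i * v') + (0 + -ζ₂ i) * (-r₁ i * v' * a) +
            ((t * w' i + ζ₃ i * a) * (-r₂ i * v') + (0 + -ζ₃ i) * (-r₂ i * v' * a)))
      = - (t * v' * s) := by
    rw [hs, Finset.mul_sum, ← Finset.sum_neg_distrib]
    exact Finset.sum_congr rfl fun i _ => by ring
  rw [key]
  ring
end

section
/- (General query identity for the converted Lee–Lee HVE scheme.) Let p be a prime, a₁, a₂, a₃ ∈ ZMod p, l ∈ ℕ, S a finite subset of Fin l, and let α, v', w'₁, w'₂, t, r₁, r₂, r₃, y₁, y₂, y₃, y₄, ζ₁, ζ₂, ζ₃ ∈ ZMod p and u', h', x, σ, ζ₄ : Fin l → ZMod p. Define in (ZMod p)³: C₁ = (t*v') • b₁₁ + ζ₁ • b₂; C₂ = (t*w'₁) • b₁₁ + ζ₂ • b₂; C₃ = (t*w'₂) • b₁₁ + ζ₃ • b₂; for each i, C₄ᵢ = (t*(x i * u' i + h' i)) • b₁₁ + ζ₄ i • b₂; K₁ = (α + r₁*w'₁ + r₂*w'₂ + r₃ *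 ∑_{i ∈ S} (σ i * u' i + h' i)) • b₁₂ + y₁ • b₃; K₂ = (-r₁*v') • b₁₂ + y₂ • b₃; K₃ = (-r₂*v') • b₁₂ + y₃ • b₃; K₄ = (-r₃*v') • b₁₂ + y₄ • b₃. Then ⟪C₁, K₁⟫ + ⟪C₂, K₂⟫ + ⟪C₃, K₃⟫ + ⟪∑_{i ∈ S} C₄ᵢ, K₄⟫ = α*t*v' + t*v'*r₃ * ∑_{i ∈ S} u' i * (σ i - x i). -/
theorem stmt_9 (p : ℕ) (hp : p.Prime) (a₁ a₂ a₃ : ZMod p) (l : ℕ) (S : Finset (Fin l))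
    (α v' w'₁ w'₂ t r₁ r₂ r₃ y₁ y₂ y₃ y₄ ζ₁ ζ₂ ζ₃ : ZMod p)
    (u' h' x σ ζ₄ : Fin l → ZMod p) :
    inner3 ((t * v') • llB11 a₁ + ζ₁ • llB2 a₁ a₂ a₃)
        ((α + r₁ * w'₁ + r₂ * w'₂ + r₃ * ∑ i ∈ S, (σ i * u' i + h' i)) • llB12 a₂
          + y₁ • llB3 a₁ a₃)
      + inner3 ((t * w'₁) • llB11 a₁ + ζ₂ • llB2 a₁ a₂ a₃)
          ((-r₁ * v') • llB12 a₂ + y₂ • llB3 a₁ a₃)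
      + inner3 ((t * w'₂) • llB11 a₁ + ζ₃ • llB2 a₁ a₂ a₃)
          ((-r₂ * v') • llB12 a₂ + y₃ • llB3 a₁ a₃)
      + inner3 (∑ i ∈ S, ((t * (x i * u' i + h' i)) • llB11 a₁ + ζ₄ i • llB2 a₁ a₂ a₃))
          ((-r₃ * v') • llB12 a₂ + y₄ • llB3 a₁ a₃)
      = α * t * v' + t * v' * r₃ * ∑ i ∈ S, u' i * (σ i - x i) := by
  simp only [inner3, llB11, llB12, llB2, llB3, Fin.sum_univ_three, Pi.add_apply,
    Pi.smul_apply, Finset.sum_apply, smul_eq_mul, Matrix.cons_val_zero, Matrix.cons_val_one,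
    Matrix.head_cons, Matrix.cons_val_two, Matrix.tail_cons, Finset.mul_sum, Finset.sum_mul,
    mul_sub, mul_add, ← Finset.sum_add_distrib, ← Finset.sum_sub_distrib]
  ring_nf
  rw [Finset.mul_sum, add_assoc, ← Finset.sum_add_distrib]
  congr 1
  apply Finset.sum_congr rfl
  intro i _
  ring
end

section
/- (Correctness of the converted Lee–Lee HVE scheme.) Let p be a prime, a₁, a₂, a₃ ∈ ZMod p, l ∈ ℕ, S a finite subset of Fin l, and let α, v', w'₁, w'₂, t, r₁, r₂, r₃, y₁, y₂, y₃, y₄, ζ₁, ζ₂, ζ₃ ∈ ZMod p and u', h', x, σ, ζ₄ : Fin l → ZMod p. Define C₁ = (t*v') • b₁₁ + ζ₁ • b₂, C₂ = (t*w'₁) • b₁₁ + ζ₂ • b₂, C₃ = (t*w'₂) • b₁₁ + ζ₃ • b₂, C₄ᵢ = (t*(x i * u' i + h' i)) • b₁₁ + ζ₄ i • b₂, K₁ = (α + r₁*w'₁ + r₂*w'₂ + r₃ * ∑_{i ∈ S} (σ i * u' i + h' i)) • b₁₂ + y₁ • b₃, K₂ = (-r₁*v') • b₁₂ + y₂ •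 b₃, K₃ = (-r₂*v') • b₁₂ + y₃ • b₃, K₄ = (-r₃*v') • b₁₂ + y₄ • b₃ in (ZMod p)³. If σ i = x i for every i ∈ S, then ⟪C₁, K₁⟫ + ⟪C₂, K₂⟫ + ⟪C₃, K₃⟫ + ⟪∑_{i ∈ S} C₄ᵢ, K₄⟫ = α*t*v'. (Hence Query(CT, TK_σ, PK) recovers M = C₀ / Ω^t, since Ω^t = ê(g,g)^{α t v'}.) -/
theorem stmt_10 (p : ℕ) (hp : p.Prime) (a₁ a₂ a₃ : ZMod p) (l : ℕ) (S : Finset (Fin l))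
    (α v' w'₁ w'₂ t r₁ r₂ r₃ y₁ y₂ y₃ y₄ ζ₁ ζ₂ ζ₃ : ZMod p)
    (u' h' x σ ζ₄ : Fin l → ZMod p)
    (hmatch : ∀ i ∈ S, σ i = x i) :
    inner3 ((t * v') • llB11 a₁ + ζ₁ • llB2 a₁ a₂ a₃)
        ((α + r₁ * w'₁ + r₂ * w'₂ + r₃ * ∑ i ∈ S, (σ i * u' i + h' i)) • llB12 a₂
          + y₁ • llB3 a₁ a₃)
      + inner3 ((t * w'₁) • llB11 a₁ + ζ₂ • llB2 a₁ a₂ a₃)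
          ((-r₁ * v') • llB12 a₂ + y₂ • llB3 a₁ a₃)
      + inner3 ((t * w'₂) • llB11 a₁ + ζ₃ • llB2 a₁ a₂ a₃)
          ((-r₂ * v') • llB12 a₂ + y₃ • llB3 a₁ a₃)
      + inner3 (∑ i ∈ S, ((t * (x i * u' i + h' i)) • llB11 a₁ + ζ₄ i • llB2 a₁ a₂ a₃))
          ((-r₃ * v') • llB12 a₂ + y₄ • llB3 a₁ a₃)
      = α * t * v' := by
  have h : ∑ i ∈ S, (σ i * u' i + h' i) = ∑ i ∈ S, (x i * u' i + h' i) :=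
    Finset.sum_congr rfl fun i hi => by rw [hmatch i hi]
  rw [h]
  simp only [inner3, llB11, llB12, llB2, llB3, Fin.sum_univ_three, Finset.sum_apply,
    Pi.add_apply, Pi.smul_apply, smul_eq_mul, Matrix.cons_val_zero, Matrix.cons_val_one,
    Matrix.head_cons, Matrix.cons_val_two, Matrix.tail_cons, Finset.sum_add_distrib,
    Finset.mul_sum, Finset.sum_mul, ← Finset.sum_add_distrib]
  rw [show (∑ i ∈ S, ((t * (x i * u' i + h' i) * 1 + ζ₄ i * a₂) * (-r₃ * v' * 1 + y₄ * a₁) +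
            (t * (x i * u' i + h' i) * 0 + ζ₄ i * -1) * (-r₃ * v' * a₂ + y₄ * a₃) +
          (t * (x i * u' i + h' i) * a₁ + ζ₄ i * (a₁ * a₂ - a₃)) * (-r₃ * v' * 0 + y₄ * -1)))
      = ∑ i ∈ S, (-(t * r₃ * v')) * (x i * u' i + h' i) from
    Finset.sum_congr rfl fun i _ => by ring,
    ← Finset.mul_sum, ← Finset.mul_sum]
  ring
end

section
/- (General query identity for the converted Shi–Waters delegatable HVE scheme.) Let p be a prime, a₁, a₂, a₃ ∈ ZMod p, l ∈ ℕ, S a finite subset of Fin l, and let α, v', w'₁, w'₂, t, r₁, r₂, y₁, y₂, y₃, ζ₁, ζ₂, ζ₃ ∈ ZMod p and u', h', x, σ, r₃, y₄, ζ₄ : Fin l → ZMod p. Define in (ZMod p)³: C₁ = (t*v') • b₁₁ + ζ₁ • b₂; C₂ = (t*w'₁) • b₁₁ + ζ₂ • b₂; C₃ = (t*w'₂) • b₁₁ + ζ₃ • b₂; for each i, C₄ᵢ = (t*(x i * u' i + h' i)) • b₁₁ + ζ₄ i • b₂; K₁ = (α + r₁*w'₁ + r₂*w'₂ + ∑_{i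 ∈ S} r₃ i * (σ i * u' i + h' i)) • b₁₂ + y₁ • b₃; K₂ = (-r₁*v') • b₁₂ + y₂ • b₃; K₃ = (-r₂*v') • b₁₂ + y₃ • b₃; for each i, K₄ᵢ = (-(r₃ i)*v') • b₁₂ + y₄ i • b₃. Then ⟪C₁, K₁⟫ + ⟪C₂, K₂⟫ + ⟪C₃, K₃⟫ + ∑_{i ∈ S} ⟪C₄ᵢ, K₄ᵢ⟫ = α*t*v' + t*v' * ∑_{i ∈ S} r₃ i * u' i * (σ i - x i). -/
lemma inner3_key {p : ℕ} (a₁ a₂ a₃ c d e f : ZMod p) :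
    inner3 (c • llB11 a₁ + d • llB2 a₁ a₂ a₃) (e • llB12 a₂ + f • llB3 a₁ a₃) = c * e := by
  simp [inner3, llB11, llB12, llB2, llB3, Fin.sum_univ_three]
  ring

theorem stmt_11 (p : ℕ) (hp : p.Prime) (a₁ a₂ a₃ : ZMod p) (l : ℕ) (S : Finset (Fin l))
    (α v' w'₁ w'₂ t r₁ r₂ y₁ y₂ y₃ ζ₁ ζ₂ ζ₃ : ZMod p)
    (u' h' x σ r₃ y₄ ζ₄ : Fin l → ZMod p) :
    inner3 ((t * v') • llB11 a₁ + ζ₁ • llB2 a₁ a₂ a₃)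
        ((α + r₁ * w'₁ + r₂ * w'₂ + ∑ i ∈ S, r₃ i * (σ i * u' i + h' i)) • llB12 a₂
          + y₁ • llB3 a₁ a₃)
      + inner3 ((t * w'₁) • llB11 a₁ + ζ₂ • llB2 a₁ a₂ a₃)
          ((-r₁ * v') • llB12 a₂ + y₂ • llB3 a₁ a₃)
      + inner3 ((t * w'₂) • llB11 a₁ + ζ₃ • llB2 a₁ a₂ a₃)
          ((-r₂ * v') • llB12 a₂ + y₃ • llB3 a₁ a₃)
      + ∑ i ∈ S,
          inner3 ((t * (x i * u' i + h' i)) • llB11 a₁ + ζ₄ i • llB2 a₁ a₂ a₃)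
            ((-(r₃ i) * v') • llB12 a₂ + y₄ i • llB3 a₁ a₃)
      = α * t * v' + t * v' * ∑ i ∈ S, r₃ i * u' i * (σ i - x i) := by
  simp only [inner3_key]
  have key : (∑ i ∈ S, t * v' * r₃ i * (σ i * u' i + h' i))
      + ∑ i ∈ S, t * (x i * u' i + h' i) * (-r₃ i * v')
      = ∑ i ∈ S, t * v' * (r₃ i * u' i * (σ i - x i)) := by
    rw [← Finset.sum_add_distrib]
    exact Finset.sum_congr rfl fun i _ => by ring
  have h1 : t * v' * ∑ i ∈ S, r₃ i * (σ i * u' i + h' i)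
      = ∑ i ∈ S, t * v' * r₃ i * (σ i * u' i + h' i) := by
    rw [Finset.mul_sum]; exact Finset.sum_congr rfl fun i _ => by ring
  have h2 : t * v' * ∑ i ∈ S, r₃ i * u' i * (σ i - x i)
      = ∑ i ∈ S, t * v' * (r₃ i * u' i * (σ i - x i)) := Finset.mul_sum ..
  linear_combination key + h1 - h2
end

section
/- (Correctness of the converted Shi–Waters delegatable HVE scheme.) Let p be a prime, a₁, a₂, a₃ ∈ ZMod p, l ∈ ℕ, S a finite subset of Fin l, and let α, v', w'₁, w'₂, t, r₁, r₂, y₁, y₂, y₃, ζ₁, ζ₂, ζ₃ ∈ ZMod p and u', h', x, σ, r₃, y₄, ζ₄ : Fin l → ZMod p. Define C₁ = (t*v') • b₁₁ + ζ₁ • b₂, C₂ = (t*w'₁) • b₁₁ + ζ₂ • b₂, C₃ = (t*w'₂) • b₁₁ + ζ₃ • b₂, C₄ᵢ = (t*(x i * u' i + h' i)) • b₁₁ + ζ₄ i • b₂, K₁ = (α + r₁*w'₁ + r₂*w'₂ + ∑_{i ∈ S} r₃ i * (σ i * u' i + h' i)) • b₁₂ + y₁ • b₃, K₂ = (-r₁*v')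 • b₁₂ + y₂ • b₃, K₃ = (-r₂*v') • b₁₂ + y₃ • b₃, K₄ᵢ = (-(r₃ i)*v') • b₁₂ + y₄ i • b₃ in (ZMod p)³. If σ i = x i for every i ∈ S, then ⟪C₁, K₁⟫ + ⟪C₂, K₂⟫ + ⟪C₃, K₃⟫ + ∑_{i ∈ S} ⟪C₄ᵢ, K₄ᵢ⟫ = α*t*v'. (Hence Query(CT, TK_σ, PK) recovers M = C₀ / Ω^t, since Ω^t = ê(g,g)^{α t v'}.) -/
section DualBases

variable {p : ℕ} (a₁ a₂ a₃ : ZMod p)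

theorem inner3_eq_dotProduct (u v : Fin 3 → ZMod p) : inner3 u v = u ⬝ᵥ v := rfl

theorem inner3_llB11_llB12 : inner3 (llB11 a₁) (llB12 a₂) = 1 := by
  simp [inner3, llB11, llB12, Fin.sum_univ_three]

theorem inner3_llB11_llB3 : inner3 (llB11 a₁) (llB3 a₁ a₃) = 0 := by
  simp [inner3, llB11, llB3, Fin.sum_univ_three]

theorem inner3_llB2_llB12 : inner3 (llB2 a₁ a₂ a₃) (llB12 a₂) = 0 := by
  simp [inner3, llB2, llB12, Fin.sum_univ_three, mul_comm]

theorem inner3_llB2_llB3 : inner3 (llB2 a₁ a₂ a₃) (llB3 a₁ a₃) = 0 := by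
  simp [inner3, llB2, llB3, Fin.sum_univ_three]
  ring

theorem inner3_blinded (c z k y : ZMod p) :
    inner3 (c • llB11 a₁ + z • llB2 a₁ a₂ a₃) (k • llB12 a₂ + y • llB3 a₁ a₃) = c * k := by
  have h₁ := inner3_llB11_llB12 (p := p) a₁ a₂
  have h₂ := inner3_llB11_llB3 a₁ a₃
  have h₃ := inner3_llB2_llB12 a₁ a₂ a₃
  have h₄ := inner3_llB2_llB3 a₁ a₂ a₃
  simp only [inner3_eq_dotProduct] at *
  simp only [add_dotProduct, dotProduct_add, smul_dotProduct, dotProduct_smul, h₁, h₂, h₃, h₄,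
    smul_eq_mul]
  ring

end DualBases

theorem stmt_12_general (p : ℕ) (a₁ a₂ a₃ : ZMod p) (l : ℕ) (S : Finset (Fin l))
    (α v' w'₁ w'₂ t r₁ r₂ y₁ y₂ y₃ ζ₁ ζ₂ ζ₃ : ZMod p)
    (u' h' x σ r₃ y₄ ζ₄ : Fin l → ZMod p)
    (hmatch : ∀ i ∈ S, σ i = x i) :
    inner3 ((t * v') • llB11 a₁ + ζ₁ • llB2 a₁ a₂ a₃)
        ((α + r₁ * w'₁ + r₂ * w'₂ + ∑ i ∈ S, r₃ i * (σ i * u' i + h' i)) • llB12 a₂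
          + y₁ • llB3 a₁ a₃)
      + inner3 ((t * w'₁) • llB11 a₁ + ζ₂ • llB2 a₁ a₂ a₃)
          ((-r₁ * v') • llB12 a₂ + y₂ • llB3 a₁ a₃)
      + inner3 ((t * w'₂) • llB11 a₁ + ζ₃ • llB2 a₁ a₂ a₃)
          ((-r₂ * v') • llB12 a₂ + y₃ • llB3 a₁ a₃)
      + ∑ i ∈ S,
          inner3 ((t * (x i * u' i + h' i)) • llB11 a₁ + ζ₄ i • llB2 a₁ a₂ a₃)
            ((-(r₃ i) * v') • llB12 a₂ + y₄ i • llB3 a₁ a₃)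
      = α * t * v' := by
  have hattr : ∑ i ∈ S, t * (x i * u' i + h' i) * (-(r₃ i) * v')
      = -(t * v') * ∑ i ∈ S, r₃ i * (σ i * u' i + h' i) := by
    rw [Finset.mul_sum]
    refine Finset.sum_congr rfl fun i hi => ?_
    rw [hmatch i hi]
    ring
  simp only [inner3_blinded, hattr]
  ring

theorem stmt_12 (p : ℕ) (hp : p.Prime) (a₁ a₂ a₃ : ZMod p) (l : ℕ) (S : Finset (Fin l))
    (α v' w'₁ w'₂ t r₁ r₂ y₁ y₂ y₃ ζ₁ ζ₂ ζ₃ : ZMod p)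
    (u' h' x σ r₃ y₄ ζ₄ : Fin l → ZMod p)
    (hmatch : ∀ i ∈ S, σ i = x i) :
    inner3 ((t * v') • llB11 a₁ + ζ₁ • llB2 a₁ a₂ a₃)
        ((α + r₁ * w'₁ + r₂ * w'₂ + ∑ i ∈ S, r₃ i * (σ i * u' i + h' i)) • llB12 a₂
          + y₁ • llB3 a₁ a₃)
      + inner3 ((t * w'₁) • llB11 a₁ + ζ₂ • llB2 a₁ a₂ a₃)
          ((-r₁ * v') • llB12 a₂ + y₂ • llB3 a₁ a₃)
      + inner3 ((t * w'₂) • llB11 a₁ + ζ₃ • llB2 a₁ a₂ a₃)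
          ((-r₂ * v') • llB12 a₂ + y₃ • llB3 a₁ a₃)
      + ∑ i ∈ S,
          inner3 ((t * (x i * u' i + h' i)) • llB11 a₁ + ζ₄ i • llB2 a₁ a₂ a₃)
            ((-(r₃ i) * v') • llB12 a₂ + y₄ i • llB3 a₁ a₃)
      = α * t * v' :=
  stmt_12_general p a₁ a₂ a₃ l S α v' w'₁ w'₂ t r₁ r₂ y₁ y₂ y₃ ζ₁ ζ₂ ζ₃ u' h' x σ r₃ y₄ ζ₄ hmatch
end

section
/- (Delegation correctness for the main component K₁ of the converted Shi–Waters delegatable HVE scheme.) Let p be a prime, a₁, a₂, a₃ ∈ ZMod p, l ∈ ℕ, S₀ a finite subset of Fin l, k ∈ Fin l with k ∉ S₀, and let α, v', w'₁, w'₂, r₁, r₂, y₁, s₁, s₂, y_u, y_h, μ, y ∈ ZMod p and u', h', σ, r₃, s₃ : Fin l → ZMod p. Define in (ZMod p)³: K₁ = (α + r₁*w'₁ + r₂*w'₂ + ∑_{i ∈ S₀} r₃ i * (σ i * u' i + h' i)) • b₁₂ + y₁ • b₃; L₁ᵤ = (s₃ k * u' k) • b₁₂ + y_u • b₃; Lₕ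 = (s₁*w'₁ + s₂*w'₂ + ∑_{i ∈ S₀} s₃ i * (σ i * u' i + h' i) + s₃ k * h' k) • b₁₂ + y_h • b₃. Then there exists ỹ ∈ ZMod p such that K₁ + μ • ((σ k) • L₁ᵤ + Lₕ) + y • b₃ = (α + (r₁ + μ*s₁)*w'₁ + (r₂ + μ*s₂)*w'₂ + ∑_{i ∈ S₀} (r₃ i + μ*(s₃ i)) * (σ i * u' i + h' i) + (μ*(s₃ k)) * (σ k * u' k + h' k)) • b₁₂ + ỹ • b₃. (That is, the delegated component K̃₁ has exactly the form of the K₁ component of a freshly generated token for the vector with index k fixed to σ k, with updated randomness r̃₁ = r₁ + μs₁, r̃₂ = r₂ + μs₂, r̃₃ᵢ = r₃ᵢ + μs₃ᵢ for i ∈ S₀, and r̃₃ₖ = μs₃ₖ.) -/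
theorem stmt_13 (p : ℕ) (hp : p.Prime) (a₁ a₂ a₃ : ZMod p) (l : ℕ)
    (S₀ : Finset (Fin l)) (k : Fin l) (hk : k ∉ S₀)
    (α v' w'₁ w'₂ r₁ r₂ y₁ s₁ s₂ y_u y_h μ y : ZMod p)
    (u' h' σ r₃ s₃ : Fin l → ZMod p) :
    ∃ ytilde : ZMod p,
      ((α + r₁ * w'₁ + r₂ * w'₂ + ∑ i ∈ S₀, r₃ i * (σ i * u' i + h' i)) • llB12 a₂
          + y₁ • llB3 a₁ a₃)
        + μ • ((σ k) • ((s₃ k * u' k) • llB12 a₂ + y_u • llB3 a₁ a₃)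
            + ((s₁ * w'₁ + s₂ * w'₂ + ∑ i ∈ S₀, s₃ i * (σ i * u' i + h' i)
                + s₃ k * h' k) • llB12 a₂ + y_h • llB3 a₁ a₃))
        + y • llB3 a₁ a₃
      = (α + (r₁ + μ * s₁) * w'₁ + (r₂ + μ * s₂) * w'₂
          + ∑ i ∈ S₀, (r₃ i + μ * s₃ i) * (σ i * u' i + h' i)
          + (μ * s₃ k) * (σ k * u' k + h' k)) • llB12 a₂
        + ytilde • llB3 a₁ a₃ := by
  refine ⟨y₁ + μ * (σ k * y_u + y_h) + y, ?_⟩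
  have hsum : ∑ i ∈ S₀, (r₃ i + μ * s₃ i) * (σ i * u' i + h' i)
      = (∑ i ∈ S₀, r₃ i * (σ i * u' i + h' i))
        + μ * ∑ i ∈ S₀, s₃ i * (σ i * u' i + h' i) := by
    rw [Finset.mul_sum, ← Finset.sum_add_distrib]
    exact Finset.sum_congr rfl fun i _ => by ring
  funext j
  fin_cases j <;>
    simp only [hsum, llB12, llB3, Pi.add_apply, Pi.smul_apply, smul_eq_mul,
      Matrix.cons_val_zero, Matrix.cons_val_one, Matrix.head_cons,
      Matrix.cons_val_two, Matrix.tail_cons] <;> ring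
end

section
/- (Delegation correctness for the auxiliary components K₂, K₃, K₄ of the converted Shi–Waters delegatable HVE scheme.) Let p be a prime, a₁, a₂, a₃ ∈ ZMod p, l ∈ ℕ, S₀ a finite subset of Fin l, k ∈ Fin l with k ∉ S₀, and let v', r₁, r₂, y₂, y₃, s₁, s₂, y'₂, μ, z₂, z₄ ∈ ZMod p and r₃, s₃, y₄, y'₄, z : Fin l → ZMod p. Define in (ZMod p)³: K₂ = (-r₁*v') • b₁₂ + y₂ • b₃, L₂ = (-s₁*v') • b₁₂ + y'₂ • b₃, K₄ᵢ = (-(r₃ i)*v') • b₁₂ + y₄ i • b₃ for i ∈ S₀, and L₄ᵢ = (-(s₃ i)*v') • b₁₂ + y'₄ i • b₃ for i ∈ S₀ ∪ {k}. Then: (1) there exists ỹ ∈ ZMod p with K₂ + μ • L₂ + z₂ • b₃ = (-(r₁ + μ*s₁)*v') • b₁₂ + ỹ • b₃; (2) there exists ỹ ∈ ZMod p with μ • L₄ k + z₄ • b₃ = (-(μ*(s₃ k))*v') • b₁₂ + ỹ • b₃; and (3) for every i ∈ S₀ there exists ỹᵢ ∈ ZMod p with K₄ᵢ + μ • L₄ᵢ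 + (z i) • b₃ = (-((r₃ i) + μ*(s₃ i))*v') • b₁₂ + ỹᵢ • b₃. (That is, all updated components K̃₂, K̃₄ₖ, K̃₄ᵢ have exactly the form of the corresponding components of a freshly generated token with randomness r̃₁ = r₁ + μs₁, r̃₃ₖ = μs₃ₖ, r̃₃ᵢ = r₃ᵢ + μs₃ᵢ.) -/
theorem stmt_14 (p : ℕ) (hp : p.Prime) (a₁ a₂ a₃ : ZMod p) (l : ℕ)
    (S₀ : Finset (Fin l)) (k : Fin l) (hk : k ∉ S₀)
    (v' r₁ r₂ y₂ y₃ s₁ s₂ y'₂ μ z₂ z₄ : ZMod p)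
    (r₃ s₃ y₄ y'₄ z : Fin l → ZMod p) :
    (∃ ytilde : ZMod p,
      ((-r₁ * v') • llB12 a₂ + y₂ • llB3 a₁ a₃)
          + μ • ((-s₁ * v') • llB12 a₂ + y'₂ • llB3 a₁ a₃)
          + z₂ • llB3 a₁ a₃
        = (-(r₁ + μ * s₁) * v') • llB12 a₂ + ytilde • llB3 a₁ a₃) ∧
    (∃ ytilde : ZMod p,
      μ • ((-(s₃ k) * v') • llB12 a₂ + y'₄ k • llB3 a₁ a₃) + z₄ • llB3 a₁ a₃
        = (-(μ * s₃ k) * v') • llB12 a₂ + ytilde • llB3 a₁ a₃) ∧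
    (∀ i ∈ S₀, ∃ ytilde : ZMod p,
      ((-(r₃ i) * v') • llB12 a₂ + y₄ i • llB3 a₁ a₃)
          + μ • ((-(s₃ i) * v') • llB12 a₂ + y'₄ i • llB3 a₁ a₃)
          + (z i) • llB3 a₁ a₃
        = (-(r₃ i + μ * s₃ i) * v') • llB12 a₂ + ytilde • llB3 a₁ a₃) := by
  refine ⟨⟨y₂ + μ * y'₂ + z₂, ?_⟩, ⟨μ * y'₄ k + z₄, ?_⟩,
    fun i _ => ⟨y₄ i + μ * y'₄ i + z i, ?_⟩⟩ <;>
  · funext j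
    fin_cases j <;> simp [llB12, llB3] <;> ring
end

section
/- (A delegated token decrypts correctly.) Let p be a prime, a₁, a₂, a₃ ∈ ZMod p, l ∈ ℕ, S₀ a finite subset of Fin l, k ∈ Fin l with k ∉ S₀, and set S = S₀ ∪ {k}. Let α, v', w'₁, w'₂, t, r₁, r₂, s₁, s₂, μ, y₁, y₂, y₃, ζ₁, ζ₂, ζ₃ ∈ ZMod p and u', h', x, σ, r₃, s₃, y₄, ζ₄ : Fin l → ZMod p. Define the delegated randomness r̃₁ = r₁ + μ*s₁, r̃₂ = r₂ + μ*s₂, r̃₃ i = r₃ i + μ*(s₃ i) for i ∈ S₀, and r̃₃ k = μ*(s₃ k), and define in (ZMod p)³ the ciphertext exponent vectors C₁ = (t*v') • b₁₁ + ζ₁ • b₂, C₂ = (t*w'₁) • b₁₁ + ζ₂ • b₂, C₃ = (t*w'₂) • b₁₁ + ζ₃ • b₂, C₄ᵢ = (t*(x i * u' i + h' i)) • b₁₁ + ζ₄ i • b₂, and the delegated token exponent vectors K̃₁ = (α + r̃₁*w'₁ + r̃₂*w'₂ + ∑_{i ∈ S} r̃₃ i * (σ i * u' i + h' i)) • b₁₂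 + y₁ • b₃, K̃₂ = (-r̃₁*v') • b₁₂ + y₂ • b₃, K̃₃ = (-r̃₂*v') • b₁₂ + y₃ • b₃, K̃₄ᵢ = (-(r̃₃ i)*v') • b₁₂ + y₄ i • b₃. If σ i = x i for every i ∈ S, then ⟪C₁, K̃₁⟫ + ⟪C₂, K̃₂⟫ + ⟪C₃, K̃₃⟫ + ∑_{i ∈ S} ⟪C₄ᵢ, K̃₄ᵢ⟫ = α*t*v'. -/
theorem stmt_15 (p : ℕ) (hp : p.Prime) (a₁ a₂ a₃ : ZMod p) (l : ℕ)
    (S₀ : Finset (Fin l)) (k : Fin l) (hk : k ∉ S₀)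
    (α v' w'₁ w'₂ t r₁ r₂ s₁ s₂ μ y₁ y₂ y₃ ζ₁ ζ₂ ζ₃ : ZMod p)
    (u' h' x σ r₃ s₃ y₄ ζ₄ : Fin l → ZMod p)
    (hmatch : ∀ i ∈ S₀ ∪ {k}, σ i = x i) :
    let S : Finset (Fin l) := S₀ ∪ {k}
    let r₁' : ZMod p := r₁ + μ * s₁
    let r₂' : ZMod p := r₂ + μ * s₂
    let r₃' : Fin l → ZMod p := fun i => if i = k then μ * s₃ k else r₃ i + μ * s₃ i
    inner3 ((t * v') • llB11 a₁ + ζ₁ • llB2 a₁ a₂ a₃)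
        ((α + r₁' * w'₁ + r₂' * w'₂ + ∑ i ∈ S, r₃' i * (σ i * u' i + h' i)) • llB12 a₂
          + y₁ • llB3 a₁ a₃)
      + inner3 ((t * w'₁) • llB11 a₁ + ζ₂ • llB2 a₁ a₂ a₃)
          ((-r₁' * v') • llB12 a₂ + y₂ • llB3 a₁ a₃)
      + inner3 ((t * w'₂) • llB11 a₁ + ζ₃ • llB2 a₁ a₂ a₃)
          ((-r₂' * v') • llB12 a₂ + y₃ • llB3 a₁ a₃)
      + ∑ i ∈ S,
          inner3 ((t * (x i * u' i + h' i)) • llB11 a₁ + ζ₄ i • llB2 a₁ a₂ a₃)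
            ((-(r₃' i) * v') • llB12 a₂ + y₄ i • llB3 a₁ a₃)
      = α * t * v' := by
  intro S r₁' r₂' r₃'
  simp only [inner3_key]
  rw [show (∑ i ∈ S, r₃' i * (σ i * u' i + h' i)) = ∑ i ∈ S, r₃' i * (x i * u' i + h' i) from
    Finset.sum_congr rfl (fun i hi => by rw [hmatch i hi])]
  have h1 : ∀ i ∈ S, t * (x i * u' i + h' i) * (-r₃' i * v')
      = -(t * v' * (r₃' i * (x i * u' i + h' i))) := fun i _ => by ring
  rw [Finset.sum_congr rfl h1, Finset.sum_neg_distrib, ← Finset.mul_sum]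
  ring
end
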